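/- For all natural numbers n and m with 1 ≤ m ≤ n, m·c(n, n−m) = ∑_{k=0}^{m−1} C(n−k, m+1−k)·c(n, n−k), where C(a,b) denotes the binomial coefficient (equal to 0 when b > a). -/

import Mathlib

/-!
Removing `none` from a permutation of `Option α` either deletes a fixed point or removes one point
from a cycle, so the cycle counts satisfy `c(n+1, k+1) = n c(n, k+1) + c(n, k)`, the recurrence
defining `Nat.stirlingFirst`; equivalently, `c(n, k)` is the coefficient of `X^k` in the rising
factorial `X (X+1) ⋯ (X+n-1)`. Comparing coefficients of `X^(t+1)` in
`X (X+1) ⋯ (X+n) = X · ((X+1) ⋯ (X+n))` gives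
`∑_j C(j, t) c(n, j) = c(n+1, t+1) = n c(n, t+1) + c(n, t)`. For `t = n - m - 1` the terms
`j = t, t+1` of the sum are `c(n, t) + (t+1) c(n, t+1)`, and the terms `j = n - k` with `k < m`
are those of the right-hand side.
-/

/-- The Stirling cycle number `c(n,k)`: the number of permutations of an
`n`-element set whose decomposition into disjoint cycles (counting fixed
points as cycles) consists of exactly `k` cycles. -/
noncomputable def stirlingCycle (n k : ℕ) : ℕ :=
  Nat.card {σ : Equiv.Perm (Fin n) //
    σ.cycleType.card + Nat.card {x : Fin n // σ x = x} = k}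

open Finset Polynomial

namespace Nat

theorem mul_stirlingFirst_zero (n : ℕ) : n * stirlingFirst n 0 = 0 := by
  cases n <;> rfl

theorem coeff_ascPochhammer (n k : ℕ) : (ascPochhammer ℕ n).coeff k = stirlingFirst n k := by
  induction n generalizing k with
  | zero => cases k <;> simp [coeff_one]
  | succ n ih =>
    rw [ascPochhammer_succ_right]
    cases k with
    | zero => simp [ih, mul_comm, mul_stirlingFirst_zero]
    | succ k => simp [mul_add, ih, stirlingFirst_succ_succ, mul_comm, add_comm]

theorem sum_choose_mul_stirlingFirst (n r : ℕ) :
    ∑ j ∈ range (n + 1), j.choose r * stirlingFirst n j = stirlingFirst (n + 1) (r + 1) := by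
  rw [← coeff_ascPochhammer, ascPochhammer_succ_left, coeff_X_mul,
    as_sum_range' (ascPochhammer ℕ n) (n + 1) (by simp [ascPochhammer_natDegree])]
  simp [coeff_X_add_one_pow, coeff_ascPochhammer, mul_comm]

theorem mul_stirlingFirst_sub_eq_sum {n m : ℕ} (hmn : m ≤ n) :
    m * stirlingFirst n (n - m) =
      ∑ k ∈ range m, (n - k).choose (m + 1 - k) * stirlingFirst n (n - k) := by
  rcases hmn.eq_or_lt with rfl | hlt
  · rw [Nat.sub_self, mul_stirlingFirst_zero]
    exact (sum_eq_zero fun k hk => by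
      rw [choose_eq_zero_of_lt (by simp at hk; omega), zero_mul]).symm
  obtain ⟨t, hn⟩ : ∃ t, n = m + t + 1 := ⟨n - m - 1, by omega⟩
  have hreflect : ∑ k ∈ range m, (n - k).choose (m + 1 - k) * stirlingFirst n (n - k) =
      ∑ j ∈ Ico (t + 2) (n + 1), j.choose t * stirlingFirst n j := by
    calc _ = ∑ k ∈ Ico 0 m, (n - k).choose t * stirlingFirst n (n - k) := by
          refine sum_congr (range_eq_Ico m) fun k hk => ?_
          rw [choose_symm_of_eq_add (b := t) (by simp at hk; omega)]
      _ = _ := by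
          rw [sum_Ico_reflect (fun j => j.choose t * stirlingFirst n j) 0 (by omega),
            show n + 1 - m = t + 2 by omega, Nat.sub_zero]
  have hlow : ∑ j ∈ range (t + 2), j.choose t * stirlingFirst n j =
      stirlingFirst n t + (t + 1) * stirlingFirst n (t + 1) := by
    rw [sum_range_succ, sum_range_succ, choose_self, choose_succ_self_right, one_mul,
      sum_eq_zero fun j hj => by rw [choose_eq_zero_of_lt (mem_range.mp hj), zero_mul], zero_add]
  have htotal := sum_choose_mul_stirlingFirst n t
  rw [← sum_range_add_sum_Ico _ (by omega : t + 2 ≤ n + 1), hlow, ← hreflect,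
    stirlingFirst_succ_succ n t] at htotal
  have hsplit : n * stirlingFirst n (t + 1) =
      m * stirlingFirst n (t + 1) + (t + 1) * stirlingFirst n (t + 1) := by
    rw [← add_mul, hn, add_assoc]
  rw [show n - m = t + 1 by omega]
  omega

end Nat

namespace Equiv.Perm

variable {α β : Type*} [Fintype α] [DecidableEq α] [Fintype β] [DecidableEq β]

noncomputable def numCycles (σ : Perm α) : ℕ :=
  Multiset.card σ.cycleType + Nat.card {x : α // σ x = x}

theorem numCycles_eq (σ : Perm α) :
    σ.numCycles = Fintype.card α - #σ.support + Multiset.card σ.cycleType := by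
  rw [numCycles, ← sum_cycleType, ← card_fixedPoints, add_comm, Nat.card_eq_fintype_card]
  rfl

theorem numCycles_one : (1 : Perm α).numCycles = Fintype.card α := by
  simp [numCycles_eq]

theorem IsCycle.numCycles {c : Perm α} (hc : c.IsCycle) :
    c.numCycles = Fintype.card α - #c.support + 1 := by
  rw [numCycles_eq, hc.cycleType, Multiset.card_singleton]

theorem numCycles_pos [Nonempty α] (σ : Perm α) : 0 < σ.numCycles := by
  rcases (Multiset.card σ.cycleType).eq_zero_or_pos with h | h
  · rw [card_cycleType_eq_zero.mp h, numCycles_one]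
    exact Fintype.card_pos
  · rw [numCycles_eq]
    omega

theorem Disjoint.numCycles_mul_add {σ τ : Perm α} (h : σ.Disjoint τ) :
    (σ * τ).numCycles + Fintype.card α = σ.numCycles + τ.numCycles := by
  have hle : #σ.support + #τ.support ≤ Fintype.card α := h.card_support_mul ▸ card_le_univ _
  rw [numCycles_eq, numCycles_eq, numCycles_eq, h.cycleType_mul, h.card_support_mul,
    Multiset.card_add]
  omega

theorem IsCycle.numCycles_swap_mul {c : Perm α} (hc : c.IsCycle) {x : α} (hx : c x ≠ x) :
    (swap x (c x) * c).numCycles = c.numCycles + 1 := by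
  have hle := card_le_univ c.support
  -- `swap x (c x) * c` is `c` with `x` cut out of the cycle, or `1` if `c` is a transposition.
  by_cases h2 : c (c x) = x
  · have hswap : c = swap x (c x) := hc.eq_swap_of_apply_apply_eq_self hx h2
    have hcard : #c.support = 2 := by rw [hswap]; exact card_support_swap hx.symm
    have hone : swap x (c x) * c = 1 := by
      nth_rewrite 2 [hswap]
      exact swap_mul_self _ _
    rw [hc.numCycles, hone, numCycles_one]
    omega
  · have hcard : #(swap x (c x) * c).support + 1 = #c.support := by
      rw [support_swap_mul_eq c x h2, card_sdiff_of_subset (by simpa using mem_support.mpr hx),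
        card_singleton]
      have := card_support_swap_mul hx
      omega
    rw [(hc.swap_mul hx h2).numCycles, hc.numCycles]
    omega

theorem numCycles_swap_mul (σ : Perm α) {x : α} (hx : σ x ≠ x) :
    (swap x (σ x) * σ).numCycles = σ.numCycles + 1 := by
  set c := σ.cycleOf x
  have hc : c.IsCycle := isCycle_cycleOf σ hx
  have hcx : c x = σ x := cycleOf_apply_self σ x
  have hdisj : (σ * c⁻¹).Disjoint c :=
    disjoint_mul_inv_of_mem_cycleFactorsFinset (cycleOf_mem_cycleFactorsFinset_iff.mpr
      (mem_support.mpr hx))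
  have hσ : σ = c * (σ * c⁻¹) := by rw [← hdisj.commute.eq, inv_mul_cancel_right]
  have hdisj' : (swap x (c x) * c).Disjoint (σ * c⁻¹) :=
    hdisj.symm.mono (fun y hy => (mem_support_swap_mul_imp_mem_support_ne hy).1) le_rfl
  have h1 := hdisj.symm.numCycles_mul_add
  have h2 := hdisj'.numCycles_mul_add
  rw [← hσ] at h1
  rw [mul_assoc, ← hσ, hc.numCycles_swap_mul (hcx ▸ hx)] at h2
  rw [← hcx]
  omega

theorem numCycles_extendDomain {p : β → Prop} [DecidablePred p] (f : α ≃ Subtype p)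
    (σ : Perm α) :
    (σ.extendDomain f).numCycles = σ.numCycles + Fintype.card {b // ¬p b} := by
  have hcard : Fintype.card {b // p b} = Fintype.card α := (Fintype.card_congr f).symm
  have hle := card_le_univ σ.support
  rw [numCycles_eq, numCycles_eq, cycleType_extendDomain, card_support_extend_domain,
    Fintype.card_subtype_compl, hcard]
  have := Fintype.card_subtype_le p
  omega

theorem numCycles_permCongr (e : α ≃ β) (σ : Perm α) :
    numCycles (e.permCongr σ) = σ.numCycles := by
  have hext :
      e.permCongr σ = σ.extendDomain (e.trans (subtypeUnivEquiv fun _ => trivial).symm) := by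
    ext b
    rw [extendDomain_apply_subtype _ _ trivial]
    simp
  simp [hext, numCycles_extendDomain]

theorem numCycles_optionCongr (σ : Perm α) : numCycles σ.optionCongr = σ.numCycles + 1 := by
  have hext : σ.optionCongr = σ.extendDomain (optionIsSomeEquiv α).symm := by
    ext (_ | a)
    · rw [extendDomain_apply_not_subtype _ _ (by simp)]
      simp
    · rw [extendDomain_apply_subtype _ _ (by simp)]
      simp [optionIsSomeEquiv]
  simp [hext, numCycles_extendDomain]

theorem numCycles_eq_numCycles_removeNone (σ : Perm (Option α)) :
    σ.numCycles = numCycles (removeNone σ) + if σ none = none then 1 else 0 := by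
  have h := numCycles_optionCongr (removeNone σ)
  rw [map_equiv_removeNone] at h
  split_ifs with hnone
  · rwa [hnone, swap_self, ← one_def, one_mul] at h
  · rw [numCycles_swap_mul σ hnone] at h
    omega

theorem card_numCycles_congr (e : α ≃ β) (k : ℕ) :
    Nat.card {σ : Perm α // σ.numCycles = k} = Nat.card {σ : Perm β // σ.numCycles = k} :=
  Nat.card_congr (e.permCongr.subtypeEquiv fun σ => by rw [numCycles_permCongr])

theorem card_numCycles_option_succ (k : ℕ) :
    Nat.card {σ : Perm (Option α) // σ.numCycles = k + 1} =
      Fintype.card α * Nat.card {σ : Perm α // σ.numCycles = k + 1} +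
        Nat.card {σ : Perm α // σ.numCycles = k} := by
  let P (o : Option α) (τ : Perm α) : Prop :=
    τ.numCycles + (if o = none then 1 else 0) = k + 1
  have e : {σ : Perm (Option α) // σ.numCycles = k + 1} ≃ Σ o, {τ : Perm α // P o τ} :=
    (decomposeOption.subtypeEquiv fun σ => by rw [numCycles_eq_numCycles_removeNone]; rfl).trans
      (subtypeProdEquivSigmaSubtype P)
  rw [Nat.card_congr e, Nat.card_sigma, Fintype.sum_option]
  simp only [P, ↓reduceIte, reduceCtorEq, add_zero, Nat.add_right_cancel_iff, sum_const,
    card_univ, smul_eq_mul]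
  exact add_comm _ _

end Equiv.Perm

open Equiv.Perm

theorem stirlingCycle_eq_card_numCycles (n k : ℕ) :
    stirlingCycle n k = Nat.card {σ : Equiv.Perm (Fin n) // σ.numCycles = k} := rfl

theorem stirlingCycle_eq_stirlingFirst : ∀ n k, stirlingCycle n k = Nat.stirlingFirst n k
  | 0, k => by
    have hσ (σ : Equiv.Perm (Fin 0)) : σ.numCycles = 0 := by
      rw [Subsingleton.elim σ 1, numCycles_one, Fintype.card_fin]
    cases k <;> simp [stirlingCycle_eq_card_numCycles, hσ]
  | n + 1, 0 => by
    rw [stirlingCycle_eq_card_numCycles, Nat.stirlingFirst_succ_zero, Nat.card_eq_zero]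
    exact .inl ⟨fun ⟨σ, hσ⟩ => (numCycles_pos σ).ne' hσ⟩
  | n + 1, k + 1 => by
    rw [stirlingCycle_eq_card_numCycles, card_numCycles_congr (finSuccEquiv n),
      card_numCycles_option_succ, Fintype.card_fin, ← stirlingCycle_eq_card_numCycles,
      ← stirlingCycle_eq_card_numCycles, stirlingCycle_eq_stirlingFirst n,
      stirlingCycle_eq_stirlingFirst n, Nat.stirlingFirst_succ_succ]

theorem stmt_16_general (n m : ℕ) (hmn : m ≤ n) :
    m * stirlingCycle n (n - m) =
      ∑ k ∈ Finset.range m, (n - k).choose (m + 1 - k) * stirlingCycle n (n - k) := by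
  simp only [stirlingCycle_eq_stirlingFirst]
  exact Nat.mul_stirlingFirst_sub_eq_sum hmn

/-- Kramp's recurrence: for `1 ≤ m ≤ n`,
`m·c(n, n-m) = ∑_{k=0}^{m-1} C(n-k, m+1-k)·c(n, n-k)`. -/
theorem stmt_16 (n m : ℕ) (hm : 1 ≤ m) (hmn : m ≤ n) :
    m * stirlingCycle n (n - m) =
      ∑ k ∈ Finset.range m, (n - k).choose (m + 1 - k) * stirlingCycle n (n - k) :=
  stmt_16_general n m hmn
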